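/- The tensor λ = ∑_{i,j,k=0}^{2} ε_{ijk}|i,j,k⟩ + |2,2,2⟩ admits an exact MPS representation with non-uniform bond dimensions (3,2,2): explicitly, M^{[1]}_0 = (1/2)[[0,1,0],[1,0,0]], M^{[1]}_1 = [[0,-1,0],[1,0,0]], M^{[1]}_2 = [[1,0,1],[0,-1,0]] (2×3 rectangular), M^{[2]}_0 = (1/2)[[0,1],[1,0],[0,0]], M^{[2]}_1 = [[0,-1],[1,0],[0,0]], M^{[2]}_2 = [[1,0],[0,-1],[1,0]] (3×2), M^{[3]}_0 = (1/2)[[0,1],[1,0]], M^{[3]}_1 = [[0,-1],[1,0]], M^{[3]}_2 = [[1,0],[0,-1]] (2×2) satisfy tr(M^{[1]}_i M^{[2]}_j M^{[3]}_k) = ε_{ijk} + δ_{i,2}δ_{j,2}δ_{k,2} for all i,j,k ∈ {0,1,2}. -/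
import Mathlib


/-- The totally antisymmetric Levi-Civita symbol on `{0,1,2}`, with `ε₀₁₂ = 1`. -/
noncomputable def levi (i j k : Fin 3) : ℂ :=
  ((((j : ℤ) - (i : ℤ)) * (((k : ℤ) - (j : ℤ))) * (((k : ℤ) - (i : ℤ))) : ℤ) : ℂ) / 2

/-- Site-1 MPS matrices (`2×3` rectangular). -/
noncomputable def N1 : Fin 3 → Matrix (Fin 2) (Fin 3) ℂ
  | 0 => !![0, 1/2, 0; 1/2, 0, 0]
  | 1 => !![0, -1, 0; 1, 0, 0]
  | 2 => !![1, 0, 1; 0, -1, 0]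

/-- Site-2 MPS matrices (`3×2`). -/
noncomputable def N2 : Fin 3 → Matrix (Fin 3) (Fin 2) ℂ
  | 0 => !![0, 1/2; 1/2, 0; 0, 0]
  | 1 => !![0, -1; 1, 0; 0, 0]
  | 2 => !![1, 0; 0, -1; 1, 0]

/-- Site-3 MPS matrices (`2×2`). -/
noncomputable def N3 : Fin 3 → Matrix (Fin 2) (Fin 2) ℂ
  | 0 => !![0, 1/2; 1/2, 0]
  | 1 => !![0, -1; 1, 0]
  | 2 => !![1, 0; 0, -1]

/-- the tensor `λ = ∑ ε_{ijk}|i,j,k⟩ + |2,2,2⟩` admits an exact MPS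
representation with non-uniform bond dimensions `(3,2,2)`:
`tr(M^{[1]}_i M^{[2]}_j M^{[3]}_k) = ε_{ijk} + δ_{i,2}δ_{j,2}δ_{k,2}` for all
`i,j,k ∈ {0,1,2}`. -/
theorem stmt10 (i j k : Fin 3) :
    (N1 i * N2 j * N3 k).trace
      = levi i j k + if i = 2 ∧ j = 2 ∧ k = 2 then 1 else 0 := by
  fin_cases i <;> fin_cases j <;> fin_cases k <;>
    simp [N1, N2, N3, levi, Matrix.trace_fin_two, Matrix.mul_apply,
      Fin.sum_univ_succ] <;> norm_num
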